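/- (Dual recursion, degree 2.) For all x, y ∈ ℝ², R2(β(x))·ψ2(y) = (1 − x·y)·ψ1(y), where x·y is the Euclidean inner product. -/

import Mathlib

/-- Euclidean inner product on `ℝ²`. -/
def dotR2 (x y : ℝ × ℝ) : ℝ := x.1 * y.1 + x.2 * y.2

/-- The linear polynomial `c_p(y) = 1 − p·y` attached to a point `p`. -/
noncomputable def cpl (p y : ℝ × ℝ) : ℝ := 1 - dotR2 p y

/-- The 12×10 recursion matrix `R1` (with `γj = 2 βj − c`; the paper's `R1` is `c = 1`,
the derivative matrix `U1` is `c = 0`). -/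
noncomputable def R1g (b1 b2 b3 c : ℝ) : Matrix (Fin 12) (Fin 10) ℝ :=
  !![2*b1 - c, 0, 0, 0, 0, 2*(b3 - b2), 4*b2, 0, 0, 0;
     2*b1 - c, 0, 0, 2*(b2 - b3), 0, 0, 4*b3, 0, 0, 0;
     0, 2*b2 - c, 0, 2*(b1 - b3), 0, 0, 0, 4*b3, 0, 0;
     0, 2*b2 - c, 0, 0, 2*(b3 - b1), 0, 0, 4*b1, 0, 0;
     0, 0, 2*b3 - c, 0, 2*(b2 - b1), 0, 0, 0, 4*b1, 0;
     0, 0, 2*b3 - c, 0, 0, 2*(b1 - b2), 0, 0, 4*b2, 0;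
     0, 0, 0, 0, 0, 2*(b3 - b2), 4*(b1 - b3), 0, 0, -3*(2*b1 - c);
     0, 0, 0, 2*(b2 - b3), 0, 0, 4*(b1 - b2), 0, 0, -3*(2*b1 - c);
     0, 0, 0, 2*(b1 - b3), 0, 0, 0, 4*(b2 - b1), 0, -3*(2*b2 - c);
     0, 0, 0, 0, 2*(b3 - b1), 0, 0, 4*(b2 - b3), 0, -3*(2*b2 - c);
     0, 0, 0, 0, 2*(b2 - b1), 0, 0, 0, 4*(b3 - b2), -3*(2*b3 - c);
     0, 0, 0, 0, 0, 2*(b1 - b2), 0, 0, 4*(b3 - b1), -3*(2*b3 - c)]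

/-- The 10×12 recursion matrix `R2` (with `γj = 2 βj − c`). -/
noncomputable def R2g (b1 b2 b3 c : ℝ) : Matrix (Fin 10) (Fin 12) ℝ :=
  !![2*b1 - c, 2*b2, 0, 0, 0, 0, 0, 0, 0, 0, 0, 2*b3;
     0, 0, 0, 2*b1, 2*b2 - c, 2*b3, 0, 0, 0, 0, 0, 0;
     0, 0, 0, 0, 0, 0, 0, 2*b2, 2*b3 - c, 2*b1, 0, 0;
     0, b1 - b3, 3*b3, b2 - b3, 0, 0, 0, 0, 0, 0, 0, 0;
     0, 0, 0, 0, 0, b2 - b1, 3*b1, b3 - b1, 0, 0, 0, 0;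
     0, 0, 0, 0, 0, 0, 0, 0, 0, b3 - b2, 3*b2, b1 - b2;
     0, (b1 - b3)/2, 3*b2/2, 0, 0, 0, 0, 0, 0, 0, 3*b3/2, (b1 - b2)/2;
     0, 0, 3*b1/2, (b2 - b3)/2, 0, (b2 - b1)/2, 3*b3/2, 0, 0, 0, 0, 0;
     0, 0, 0, 0, 0, 0, 3*b2/2, (b3 - b1)/2, 0, (b3 - b2)/2, 3*b1/2, 0;
     0, 0, -(2*b3 - c), 0, 0, 0, -(2*b1 - c), 0, 0, 0, -(2*b2 - c), 0]

/-- The 12×16 recursion matrix `R3` (with `γj = 2 βj − c`). -/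
noncomputable def R3g (b1 b2 b3 c : ℝ) : Matrix (Fin 12) (Fin 16) ℝ :=
  !![2*b1 - c, 2*b2, 0, 0, 0, 0, 0, 0, 0, 0, 0, 2*b3, 0, 0, 0, 0;
     0, b1 - b3, b2, 0, 0, 0, 0, 0, 0, 0, 0, 0, 2*b3, 0, 0, 0;
     0, 0, (b1 + b2)/3, 0, 0, 0, b3/3, 0, 0, 0, b3/3, 0, 2*b1/3, 2*b2/3, 0, b3/3;
     0, 0, b1, b2 - b3, 0, 0, 0, 0, 0, 0, 0, 0, 0, 2*b3, 0, 0;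
     0, 0, 0, 2*b1, 2*b2 - c, 2*b3, 0, 0, 0, 0, 0, 0, 0, 0, 0, 0;
     0, 0, 0, 0, 0, b2 - b1, b3, 0, 0, 0, 0, 0, 0, 2*b1, 0, 0;
     0, 0, b1/3, 0, 0, 0, (b2 + b3)/3, 0, 0, 0, b1/3, 0, 0, 2*b2/3, 2*b3/3, b1/3;
     0, 0, 0, 0, 0, 0, b2, b3 - b1, 0, 0, 0, 0, 0, 0, 2*b1, 0;
     0, 0, 0, 0, 0, 0, 0, 2*b2, 2*b3 - c, 2*b1, 0, 0, 0, 0, 0, 0;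
     0, 0, 0, 0, 0, 0, 0, 0, 0, b3 - b2, b1, 0, 0, 0, 2*b2, 0;
     0, 0, b2/3, 0, 0, 0, b2/3, 0, 0, 0, (b1 + b3)/3, 0, 2*b1/3, 0, 2*b3/3, b2/3;
     0, 0, 0, 0, 0, 0, 0, 0, 0, 0, b3, b1 - b2, 2*b2, 0, 0, 0]

/-- The recursion matrix `R1(β)`. -/
noncomputable def R1 (b1 b2 b3 : ℝ) : Matrix (Fin 12) (Fin 10) ℝ := R1g b1 b2 b3 1
/-- The recursion matrix `R2(β)`. -/
noncomputable def R2 (b1 b2 b3 : ℝ) : Matrix (Fin 10) (Fin 12) ℝ := R2g b1 b2 b3 1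
/-- The recursion matrix `R3(β)`. -/
noncomputable def R3 (b1 b2 b3 : ℝ) : Matrix (Fin 12) (Fin 16) ℝ := R3g b1 b2 b3 1

/-! Since `c_p(y) = 1 − p·y` is affine in `p`, it commutes with barycentric combinations: the
Powell–Sabin points give `c₄ = (c₁ + c₂)/2`, …, `c₁₀ = (c₁ + c₂ + c₃)/3`, and
`1 − x·y = β₁c₁ + β₂c₂ + β₃c₃`. After these substitutions each row of `R2(β) ψ2(y)` is a
polynomial identity in `β₁, β₂, β₃, c₁, c₂, c₃` modulo `β₁ + β₂ + β₃ = 1`. -/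

theorem cpl_smul_add_smul {a b : ℝ} (hab : a + b = 1) (p q y : ℝ × ℝ) :
    cpl (a • p + b • q) y = a * cpl p y + b * cpl q y := by
  simp only [cpl, dotR2, Prod.fst_add, Prod.snd_add, Prod.smul_fst, Prod.smul_snd, smul_eq_mul]
  linear_combination -hab

theorem cpl_smul_add_smul_add_smul {a b c : ℝ} (habc : a + b + c = 1) (p q r y : ℝ × ℝ) :
    cpl (a • p + b • q + c • r) y = a * cpl p y + b * cpl q y + c * cpl r y := by
  simp only [cpl, dotR2, Prod.fst_add, Prod.snd_add, Prod.smul_fst, Prod.smul_snd, smul_eq_mul]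
  linear_combination -habc

theorem cpl_midpoint (p q y : ℝ × ℝ) :
    cpl ((2⁻¹ : ℝ) • (p + q)) y = (cpl p y + cpl q y) / 2 := by
  rw [smul_add, cpl_smul_add_smul (by norm_num)]
  ring

theorem cpl_centroid (p q r y : ℝ × ℝ) :
    cpl ((3⁻¹ : ℝ) • (p + q + r)) y = (cpl p y + cpl q y + cpl r y) / 3 := by
  rw [smul_add, smul_add, cpl_smul_add_smul_add_smul (by norm_num)]
  ring

theorem R2_mulVec_eq {b1 b2 b3 c1 c2 c3 c4 c5 c6 c7 c8 c9 c10 : ℝ} (hb : b1 + b2 + b3 = 1)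
    (h4 : c4 = (c1 + c2) / 2) (h5 : c5 = (c2 + c3) / 2) (h6 : c6 = (c3 + c1) / 2)
    (h7 : c7 = (c4 + c6) / 2) (h8 : c8 = (c4 + c5) / 2) (h9 : c9 = (c5 + c6) / 2)
    (h10 : c10 = (c1 + c2 + c3) / 3) :
    (R2 b1 b2 b3).mulVec
      ![c1 ^ 2, c1 * c4, c4 * c10, c2 * c4, c2 ^ 2, c2 * c5, c5 * c10, c3 * c5,
        c3 ^ 2, c3 * c6, c6 * c10, c1 * c6]
      = (b1 * c1 + b2 * c2 + b3 * c3) • ![c1, c2, c3, c4, c5, c6, c7, c8, c9, c10] := by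
  obtain rfl : b3 = 1 - b1 - b2 := by linear_combination hb
  subst h7 h8 h9 h4 h5 h6 h10
  ext i
  fin_cases i <;>
    simp only [R2, R2g, Matrix.mulVec, dotProduct, Fin.sum_univ_succ, Fin.sum_univ_zero,
      Matrix.of_apply, Fin.zero_eta, Fin.mk_one, Fin.reduceFinMk, Matrix.cons_val,
      Matrix.cons_val_zero, Matrix.cons_val_succ, Pi.smul_apply, smul_eq_mul] <;>
    ring

theorem dual_recursion_deg2_general
    (p1 p2 p3 : ℝ × ℝ)
    (p4 p5 p6 p7 p8 p9 p10 : ℝ × ℝ)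
    (h4 : p4 = (2⁻¹ : ℝ) • (p1 + p2))
    (h5 : p5 = (2⁻¹ : ℝ) • (p2 + p3))
    (h6 : p6 = (2⁻¹ : ℝ) • (p3 + p1))
    (h7 : p7 = (2⁻¹ : ℝ) • (p4 + p6))
    (h8 : p8 = (2⁻¹ : ℝ) • (p4 + p5))
    (h9 : p9 = (2⁻¹ : ℝ) • (p5 + p6))
    (h10 : p10 = (3⁻¹ : ℝ) • (p1 + p2 + p3))
    (x y : ℝ × ℝ) (b1 b2 b3 : ℝ)
    (hx : x = b1 • p1 + b2 • p2 + b3 • p3)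
    (hb : b1 + b2 + b3 = 1) :
    (R2 b1 b2 b3).mulVec
      ![cpl p1 y ^ 2, cpl p1 y * cpl p4 y, cpl p4 y * cpl p10 y, cpl p2 y * cpl p4 y,
        cpl p2 y ^ 2, cpl p2 y * cpl p5 y, cpl p5 y * cpl p10 y, cpl p3 y * cpl p5 y,
        cpl p3 y ^ 2, cpl p3 y * cpl p6 y, cpl p6 y * cpl p10 y, cpl p1 y * cpl p6 y]
      = (1 - dotR2 x y) •
      ![cpl p1 y, cpl p2 y, cpl p3 y, cpl p4 y, cpl p5 y,
        cpl p6 y, cpl p7 y, cpl p8 y, cpl p9 y, cpl p10 y]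
      := by
  have hxy : 1 - dotR2 x y = b1 * cpl p1 y + b2 * cpl p2 y + b3 * cpl p3 y := by
    rw [← cpl, hx, cpl_smul_add_smul_add_smul hb]
  rw [hxy]
  exact R2_mulVec_eq hb (by rw [h4, cpl_midpoint]) (by rw [h5, cpl_midpoint])
    (by rw [h6, cpl_midpoint]) (by rw [h7, cpl_midpoint]) (by rw [h8, cpl_midpoint])
    (by rw [h9, cpl_midpoint]) (by rw [h10, cpl_centroid])

/-- dual recursion, degree 2: `R2(β(x)) ψ2(y) = (1 − x·y) ψ1(y)`. -/
theorem dual_recursion_deg2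
    (p1 p2 p3 : ℝ × ℝ)
    (hind : AffineIndependent ℝ ![p1, p2, p3])
    (p4 p5 p6 p7 p8 p9 p10 : ℝ × ℝ)
    (h4 : p4 = (2⁻¹ : ℝ) • (p1 + p2))
    (h5 : p5 = (2⁻¹ : ℝ) • (p2 + p3))
    (h6 : p6 = (2⁻¹ : ℝ) • (p3 + p1))
    (h7 : p7 = (2⁻¹ : ℝ) • (p4 + p6))
    (h8 : p8 = (2⁻¹ : ℝ) • (p4 + p5))
    (h9 : p9 = (2⁻¹ : ℝ) • (p5 + p6))
    (h10 : p10 = (3⁻¹ : ℝ) • (p1 + p2 + p3))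
    (x y : ℝ × ℝ) (b1 b2 b3 : ℝ)
    (hx : x = b1 • p1 + b2 • p2 + b3 • p3)
    (hb : b1 + b2 + b3 = 1) :
    (R2 b1 b2 b3).mulVec
      ![cpl p1 y ^ 2, cpl p1 y * cpl p4 y, cpl p4 y * cpl p10 y, cpl p2 y * cpl p4 y,
        cpl p2 y ^ 2, cpl p2 y * cpl p5 y, cpl p5 y * cpl p10 y, cpl p3 y * cpl p5 y,
        cpl p3 y ^ 2, cpl p3 y * cpl p6 y, cpl p6 y * cpl p10 y, cpl p1 y * cpl p6 y]
      = (1 - dotR2 x y) •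
      ![cpl p1 y, cpl p2 y, cpl p3 y, cpl p4 y, cpl p5 y,
        cpl p6 y, cpl p7 y, cpl p8 y, cpl p9 y, cpl p10 y] :=
  dual_recursion_deg2_general p1 p2 p3 p4 p5 p6 p7 p8 p9 p10 h4 h5 h6 h7 h8 h9 h10 x y b1 b2 b3 hx
    hb
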